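/- The LP relaxation distance d̄_p^{(c,γ)} satisfies the triangle inequality: for all finite sets of trajectories X, Y, Z over time steps 1..T, d̄_p^{(c,γ)}(X,Y) ≤ d̄_p^{(c,γ)}(X,Z) + d̄_p^{(c,γ)}(Z,Y). -/

import Mathlib

open Finset

/-- A trajectory in ℝ^N. -/
structure Traj (N : ℕ) where
  ω : ℕ
  ν : ℕ
  x : Fin ν → (Fin N → ℝ)

/-- The (possibly empty) state of the trajectory at time `k`. -/
def tau {N : ℕ} (X : Traj N) (k : ℕ) : Option (Fin N → ℝ) :=
  if h : X.ω ≤ k ∧ k < X.ω + X.ν then some (X.x ⟨k - X.ω, by omega⟩) else none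

/-- Base metric of Definition 1 on at-most-one-element subsets of ℝ^N. -/
noncomputable def dOpt {N : ℕ} (db : (Fin N → ℝ) → (Fin N → ℝ) → ℝ) (c p : ℝ) :
    Option (Fin N → ℝ) → Option (Fin N → ℝ) → ℝ
  | some x, some y => min c (db x y)
  | none, none => 0
  | _, _ => c / (2 : ℝ) ^ (1 / p)

/-- The state of the `i`-th trajectory at time `k`, where the extra index
`n_X + 1` stands for "unassigned" and yields the empty set. -/
def tauE {N n : ℕ} (X : Fin n → Traj N) (i : Fin (n + 1)) (k : ℕ) :
    Option (Fin N → ℝ) :=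
  if h : (i : ℕ) < n then tau (X ⟨i, h⟩) k else none

/-- The relaxed assignment polytope `W̄_{X,Y}` (Eqs. (18)-(21), (23)). -/
def memWbar {m n : ℕ} (W : Matrix (Fin (m + 1)) (Fin (n + 1)) ℝ) : Prop :=
  (∀ i j, 0 ≤ W i j) ∧
  (∀ j : Fin n, ∑ i, W i j.castSucc = 1) ∧
  (∀ i : Fin m, ∑ j, W i.castSucc j = 1) ∧
  W (Fin.last m) (Fin.last n) = 0

/-- The binary assignment set `W_{X,Y}` (Eqs. (18)-(21)). -/
def memWbin {m n : ℕ} (W : Matrix (Fin (m + 1)) (Fin (n + 1)) ℝ) : Prop :=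
  memWbar W ∧ ∀ i j, W i j = 0 ∨ W i j = 1

/-- The cost functional of Lemma 1 / Definition 6: localization cost plus
switching cost of a sequence of (possibly soft) assignment matrices. -/
noncomputable def lpCost {N nX nY : ℕ} (db : (Fin N → ℝ) → (Fin N → ℝ) → ℝ)
    (c γ p : ℝ) (T : ℕ) (X : Fin nX → Traj N) (Y : Fin nY → Traj N)
    (W : ℕ → Matrix (Fin (nX + 1)) (Fin (nY + 1)) ℝ) : ℝ :=
  (∑ k ∈ Finset.range T, ∑ i, ∑ j,
      (dOpt db c p (tauE X i k) (tauE Y j k)) ^ p * W k i j) +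
  γ ^ p / 2 * ∑ k ∈ Finset.range (T - 1), ∑ i : Fin nX, ∑ j : Fin nY,
      |W k i.castSucc j.castSucc - W (k + 1) i.castSucc j.castSucc|

/-- The multi-dimensional assignment distance in its binary LP form (Eq. (16)). -/
noncomputable def mdDistBin {N nX nY : ℕ} (db : (Fin N → ℝ) → (Fin N → ℝ) → ℝ)
    (c γ p : ℝ) (T : ℕ) (X : Fin nX → Traj N) (Y : Fin nY → Traj N) : ℝ :=
  sInf { v | ∃ W : ℕ → Matrix (Fin (nX + 1)) (Fin (nY + 1)) ℝ,
    (∀ k < T, memWbin (W k)) ∧ v = (lpCost db c γ p T X Y W) ^ (1 / p) }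

/-- The LP relaxation distance (Definition 6, Eq. (22)). -/
noncomputable def lpDist {N nX nY : ℕ} (db : (Fin N → ℝ) → (Fin N → ℝ) → ℝ)
    (c γ p : ℝ) (T : ℕ) (X : Fin nX → Traj N) (Y : Fin nY → Traj N) : ℝ :=
  sInf { v | ∃ W : ℕ → Matrix (Fin (nX + 1)) (Fin (nY + 1)) ℝ,
    (∀ k < T, memWbar (W k)) ∧ v = (lpCost db c γ p T X Y W) ^ (1 / p) }

/-! Compose optimal relaxed assignments `W₁` (from `X` to `Z`) and `W₂` (from `Z` to `Y`) by
routing mass from `X` through `Z` to `Y`, passing what either side leaves unassigned through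
the dummy index of `Z` (Eq. (32)). This three-way plan has `W₁` and `W₂` as marginals, so the
triangle inequality of the base metric bounds the composite localization cost by a weighted
`ℓᵖ`-sum of `d(X, Z) + d(Z, Y)`. On real indices the composition is the product of the two
real blocks, whence its switching cost is at most the sum of the two switching costs
(Eq. (33)). Minkowski's inequality splits the total, and taking infima concludes. -/

open scoped Pointwise Matrix

lemma csInf_le_csInf_add_csInf {S S₁ S₂ : Set ℝ} (hS : BddBelow S)
    (hS₁ : S₁.Nonempty) (hS₁' : BddBelow S₁) (hS₂ : S₂.Nonempty) (hS₂' : BddBelow S₂)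
    (h : ∀ a ∈ S₁, ∀ b ∈ S₂, ∃ v ∈ S, v ≤ a + b) : sInf S ≤ sInf S₁ + sInf S₂ := by
  rw [← csInf_add hS₁ hS₁' hS₂ hS₂']
  refine le_csInf (hS₁.add hS₂) ?_
  rintro _ ⟨a, ha, b, hb, rfl⟩
  obtain ⟨v, hv, hvab⟩ := h a ha b hb
  exact (csInf_le hS hv).trans hvab

section Minkowski

variable {ι : Type*} (s : Finset ι) {p : ℝ} {w f g : ι → ℝ}

lemma Lp_add_le_of_nonneg_weighted (hp : 1 ≤ p) (hw : ∀ i ∈ s, 0 ≤ w i)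
    (hf : ∀ i ∈ s, 0 ≤ f i) (hg : ∀ i ∈ s, 0 ≤ g i) :
    (∑ i ∈ s, (f i + g i) ^ p * w i) ^ (1 / p) ≤
      (∑ i ∈ s, f i ^ p * w i) ^ (1 / p) + (∑ i ∈ s, g i ^ p * w i) ^ (1 / p) := by
  have hp0 : p ≠ 0 := by positivity
  have absorb : ∀ h : ι → ℝ, (∀ i ∈ s, 0 ≤ h i) →
      ∑ i ∈ s, h i ^ p * w i = ∑ i ∈ s, (h i * w i ^ (1 / p)) ^ p := by
    refine fun h hh => Finset.sum_congr rfl fun i hi => ?_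
    rw [Real.mul_rpow (hh i hi) (Real.rpow_nonneg (hw i hi) _), one_div,
      Real.rpow_inv_rpow (hw i hi) hp0]
  rw [absorb f hf, absorb g hg, absorb _ fun i hi => add_nonneg (hf i hi) (hg i hi)]
  simpa only [add_mul] using Real.Lp_add_le_of_nonneg s hp
    (fun i hi => mul_nonneg (hf i hi) (Real.rpow_nonneg (hw i hi) _))
    (fun i hi => mul_nonneg (hg i hi) (Real.rpow_nonneg (hw i hi) _))

lemma Lp_add_le_of_nonneg_weighted_add {A B : ℝ} (hp : 1 ≤ p) (hw : ∀ i ∈ s, 0 ≤ w i)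
    (hf : ∀ i ∈ s, 0 ≤ f i) (hg : ∀ i ∈ s, 0 ≤ g i) (hA : 0 ≤ A) (hB : 0 ≤ B) :
    (∑ i ∈ s, (f i + g i) ^ p * w i + (A + B)) ^ (1 / p) ≤
      (∑ i ∈ s, f i ^ p * w i + A) ^ (1 / p) + (∑ i ∈ s, g i ^ p * w i + B) ^ (1 / p) := by
  have hp0 : p ≠ 0 := by positivity
  -- `A` and `B` enter as two extra coordinates `(A ^ (1/p), 0)` and `(0, B ^ (1/p))`.
  have key := Lp_add_le_of_nonneg_weighted (s.disjSum univ) hp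
    (w := Sum.elim w 1) (f := Sum.elim f ![A ^ (1 / p), 0]) (g := Sum.elim g ![0, B ^ (1 / p)])
    (by simpa using hw) (by simpa [Fin.forall_fin_two, Real.rpow_nonneg hA] using hf)
    (by simpa [Fin.forall_fin_two, Real.rpow_nonneg hB] using hg)
  simpa [Finset.sum_disjSum, Fin.sum_univ_two, Real.zero_rpow hp0,
    Real.rpow_inv_rpow hA hp0, Real.rpow_inv_rpow hB hp0] using key

end Minkowski

section BaseMetric

variable {N : ℕ} {db : (Fin N → ℝ) → (Fin N → ℝ) → ℝ} {c p : ℝ}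

lemma dOpt_nonneg (hc : 0 ≤ c) (hdb : ∀ x y, 0 ≤ db x y) (x y : Option (Fin N → ℝ)) :
    0 ≤ dOpt db c p x y := by
  rcases x with _ | x <;> rcases y with _ | y <;> simp only [dOpt]
  · exact le_rfl
  all_goals first
    | exact div_nonneg hc (Real.rpow_nonneg zero_le_two _)
    | exact le_min hc (hdb x y)

lemma dOpt_triangle (hc : 0 ≤ c) (hp : 1 ≤ p) (hdb : ∀ x y, 0 ≤ db x y)
    (htri : ∀ x y z, db x z ≤ db x y + db y z) (x y z : Option (Fin N → ℝ)) :
    dOpt db c p x z ≤ dOpt db c p x y + dOpt db c p y z := by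
  set e := c / (2 : ℝ) ^ (1 / p)
  have he : 0 ≤ e := div_nonneg hc (Real.rpow_nonneg zero_le_two _)
  -- Two empty-set penalties exceed the cap `c`, since `2 ^ (1 / p) ≤ 2`.
  have hce : c ≤ e + e := by
    have h2 : (2 : ℝ) ^ (1 / p) ≤ 2 := Real.rpow_le_self_of_one_le one_le_two
      (by rw [div_le_one (by positivity)]; exact hp)
    rw [← two_mul, mul_div_assoc', le_div_iff₀ (by positivity)]
    linarith [mul_le_mul_of_nonneg_left h2 hc]
  have hmin : ∀ a b, 0 ≤ min c (db a b) := fun a b => le_min hc (hdb a b)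
  rcases x with _ | a <;> rcases y with _ | b <;> rcases z with _ | d <;> simp only [dOpt]
  · linarith
  · linarith
  · linarith
  · linarith [hmin b d]
  · linarith
  · linarith [min_le_left c (db a d)]
  · linarith [hmin a b]
  · rcases le_total c (db a b) with hab | hab
    · rw [min_eq_left hab]
      linarith [min_le_left c (db a d), hmin b d]
    rcases le_total c (db b d) with hbd | hbd
    · rw [min_eq_left hbd]
      linarith [min_le_left c (db a d), hmin a b]
    rw [min_eq_right hab, min_eq_right hbd]
    exact (min_le_right _ _).trans (htri a b d)

end BaseMetric

section Composition

variable {m l n : ℕ}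

/-- The mass routed from `i` through the middle index `z` to `j` (Eq. (32)): a real middle
index composes the two assignments, while the dummy index `Fin.last l` passes on whatever
either assignment leaves unmatched. -/
def assignPlan (W₁ : Matrix (Fin (m + 1)) (Fin (l + 1)) ℝ)
    (W₂ : Matrix (Fin (l + 1)) (Fin (n + 1)) ℝ) (i : Fin (m + 1)) (z : Fin (l + 1))
    (j : Fin (n + 1)) : ℝ :=
  if z = Fin.last l then
    (if j = Fin.last n then W₁ i z else 0) + (if i = Fin.last m then W₂ z j else 0)
  else W₁ i z * W₂ z j

def assignComp (W₁ : Matrix (Fin (m + 1)) (Fin (l + 1)) ℝ)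
    (W₂ : Matrix (Fin (l + 1)) (Fin (n + 1)) ℝ) : Matrix (Fin (m + 1)) (Fin (n + 1)) ℝ :=
  Matrix.of fun i j =>
    if i = Fin.last m ∧ j = Fin.last n then 0 else ∑ z, assignPlan W₁ W₂ i z j

variable {W : Matrix (Fin (m + 1)) (Fin (n + 1)) ℝ}

lemma memWbar.sum_castSucc_row_le_one (hW : memWbar W) (i : Fin m) :
    ∑ j : Fin n, W i.castSucc j.castSucc ≤ 1 := by
  have h := hW.2.2.1 i
  rw [Fin.sum_univ_castSucc] at h
  linarith [hW.1 i.castSucc (Fin.last n)]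

lemma memWbar.sum_castSucc_col_le_one (hW : memWbar W) (j : Fin n) :
    ∑ i : Fin m, W i.castSucc j.castSucc ≤ 1 := by
  have h := hW.2.1 j
  rw [Fin.sum_univ_castSucc] at h
  linarith [hW.1 (Fin.last m) j.castSucc]

variable {W₁ : Matrix (Fin (m + 1)) (Fin (l + 1)) ℝ} {W₂ : Matrix (Fin (l + 1)) (Fin (n + 1)) ℝ}

lemma assignPlan_nonneg (h₁ : memWbar W₁) (h₂ : memWbar W₂) (i : Fin (m + 1)) (z : Fin (l + 1))
    (j : Fin (n + 1)) :
    0 ≤ assignPlan W₁ W₂ i z j := by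
  unfold assignPlan
  split_ifs <;> linarith [h₁.1 i z, h₂.1 z j, mul_nonneg (h₁.1 i z) (h₂.1 z j)]

lemma sum_assignPlan_left (h₁ : memWbar W₁) {z : Fin (l + 1)} {j : Fin (n + 1)}
    (hzj : ¬(z = Fin.last l ∧ j = Fin.last n)) : ∑ i, assignPlan W₁ W₂ i z j = W₂ z j := by
  by_cases hz : z = Fin.last l
  · have hj : j ≠ Fin.last n := fun hj => hzj ⟨hz, hj⟩
    simp [assignPlan, hz, hj]
  · obtain ⟨z, rfl⟩ := Fin.exists_castSucc_eq.2 hz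
    simp only [assignPlan, if_neg hz, ← Finset.sum_mul, h₁.2.1 z, one_mul]

lemma sum_assignPlan_right (h₂ : memWbar W₂) {i : Fin (m + 1)} {z : Fin (l + 1)}
    (hiz : ¬(i = Fin.last m ∧ z = Fin.last l)) : ∑ j, assignPlan W₁ W₂ i z j = W₁ i z := by
  by_cases hz : z = Fin.last l
  · have hi : i ≠ Fin.last m := fun hi => hiz ⟨hi, hz⟩
    simp [assignPlan, hz, hi]
  · obtain ⟨z, rfl⟩ := Fin.exists_castSucc_eq.2 hz
    simp only [assignPlan, if_neg hz, ← Finset.mul_sum, h₂.2.2.1 z, mul_one]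

lemma memWbar_assignComp (h₁ : memWbar W₁) (h₂ : memWbar W₂) :
    memWbar (assignComp W₁ W₂) := by
  refine ⟨fun i j => ?_, fun j => ?_, fun i => ?_, by simp [assignComp]⟩
  · rw [assignComp, Matrix.of_apply]
    split_ifs
    · exact le_rfl
    · exact Finset.sum_nonneg fun z _ => assignPlan_nonneg h₁ h₂ i z j
  · have hj := (Fin.castSucc_lt_last j).ne
    calc ∑ i, assignComp W₁ W₂ i j.castSucc = ∑ z, ∑ i, assignPlan W₁ W₂ i z j.castSucc := by
          simp only [assignComp, Matrix.of_apply, hj, and_false, if_false]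
          exact Finset.sum_comm
      _ = ∑ z, W₂ z j.castSucc :=
          Finset.sum_congr rfl fun z _ => sum_assignPlan_left h₁ fun h => hj h.2
      _ = 1 := h₂.2.1 j
  · have hi := (Fin.castSucc_lt_last i).ne
    calc ∑ j, assignComp W₁ W₂ i.castSucc j = ∑ z, ∑ j, assignPlan W₁ W₂ i.castSucc z j := by
          simp only [assignComp, Matrix.of_apply, hi, false_and, if_false]
          exact Finset.sum_comm
      _ = ∑ z, W₁ i.castSucc z :=
          Finset.sum_congr rfl fun z _ => sum_assignPlan_right h₂ fun h => hi h.1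
      _ = 1 := h₁.2.2.1 i

lemma submatrix_assignComp :
    (assignComp W₁ W₂).submatrix Fin.castSucc Fin.castSucc =
      W₁.submatrix Fin.castSucc Fin.castSucc * W₂.submatrix Fin.castSucc Fin.castSucc := by
  ext i j
  have hi := (Fin.castSucc_lt_last i).ne
  have hj := (Fin.castSucc_lt_last j).ne
  simp [assignComp, assignPlan, Fin.sum_univ_castSucc, hi, hj, Matrix.mul_apply]

lemma sum_mul_assignComp {D : Fin (m + 1) → Fin (n + 1) → ℝ}
    (hD : D (Fin.last m) (Fin.last n) = 0) :
    ∑ i, ∑ j, D i j * assignComp W₁ W₂ i j = ∑ i, ∑ z, ∑ j, D i j * assignPlan W₁ W₂ i z j := by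
  refine Finset.sum_congr rfl fun i _ => ?_
  rw [Finset.sum_comm]
  refine Finset.sum_congr rfl fun j _ => ?_
  rw [← Finset.mul_sum, assignComp, Matrix.of_apply]
  split_ifs with h
  · rw [h.1, h.2, hD, zero_mul, zero_mul]
  · rfl

lemma sum_mul_assignPlan_left (h₂ : memWbar W₂) {F : Fin (m + 1) → Fin (l + 1) → ℝ}
    (hF : F (Fin.last m) (Fin.last l) = 0) :
    ∑ i, ∑ z, ∑ j, F i z * assignPlan W₁ W₂ i z j = ∑ i, ∑ z, F i z * W₁ i z := by
  refine Finset.sum_congr rfl fun i _ => Finset.sum_congr rfl fun z _ => ?_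
  rw [← Finset.mul_sum]
  by_cases hiz : i = Fin.last m ∧ z = Fin.last l
  · rw [hiz.1, hiz.2, hF, zero_mul, zero_mul]
  · rw [sum_assignPlan_right h₂ hiz]

lemma sum_mul_assignPlan_right (h₁ : memWbar W₁) {G : Fin (l + 1) → Fin (n + 1) → ℝ}
    (hG : G (Fin.last l) (Fin.last n) = 0) :
    ∑ i, ∑ z, ∑ j, G z j * assignPlan W₁ W₂ i z j = ∑ z, ∑ j, G z j * W₂ z j := by
  rw [Finset.sum_comm]
  refine Finset.sum_congr rfl fun z _ => ?_
  rw [Finset.sum_comm]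
  refine Finset.sum_congr rfl fun j _ => ?_
  rw [← Finset.mul_sum]
  by_cases hzj : z = Fin.last l ∧ j = Fin.last n
  · rw [hzj.1, hzj.2, hG, zero_mul, zero_mul]
  · rw [sum_assignPlan_left h₁ hzj]

end Composition

section EntrywiseL1

variable {ι κ ν : Type*} [Fintype ι] [Fintype κ] [Fintype ν]

lemma sum_abs_mul_le_of_row_sum_le_one (M : Matrix ι κ ℝ) {B : Matrix κ ν ℝ}
    (hB : ∀ k j, 0 ≤ B k j) (hB₁ : ∀ k, ∑ j, B k j ≤ 1) :
    ∑ i, ∑ j, |(M * B) i j| ≤ ∑ i, ∑ k, |M i k| := by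
  calc ∑ i, ∑ j, |(M * B) i j| ≤ ∑ i, ∑ j, ∑ k, |M i k| * B k j := by
        refine Finset.sum_le_sum fun i _ => Finset.sum_le_sum fun j _ => ?_
        refine (Finset.abs_sum_le_sum_abs _ _).trans_eq (Finset.sum_congr rfl fun k _ => ?_)
        rw [abs_mul, abs_of_nonneg (hB k j)]
    _ = ∑ i, ∑ k, |M i k| * ∑ j, B k j := by
        simp only [Finset.mul_sum]
        exact Finset.sum_congr rfl fun i _ => Finset.sum_comm
    _ ≤ ∑ i, ∑ k, |M i k| := by
        gcongr with i _ k _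
        exact mul_le_of_le_one_right (abs_nonneg _) (hB₁ k)

lemma sum_abs_mul_le_of_col_sum_le_one {A : Matrix ι κ ℝ} (M : Matrix κ ν ℝ)
    (hA : ∀ i k, 0 ≤ A i k) (hA₁ : ∀ k, ∑ i, A i k ≤ 1) :
    ∑ i, ∑ j, |(A * M) i j| ≤ ∑ k, ∑ j, |M k j| := by
  calc ∑ i, ∑ j, |(A * M) i j| = ∑ j, ∑ i, |(Mᵀ * Aᵀ) j i| := by
        rw [← Matrix.transpose_mul, Finset.sum_comm]; rfl
    _ ≤ ∑ j, ∑ k, |Mᵀ j k| := sum_abs_mul_le_of_row_sum_le_one _ (fun k i => hA i k) hA₁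
    _ = ∑ k, ∑ j, |M k j| := Finset.sum_comm

lemma sum_abs_mul_sub_mul_le {A A' : Matrix ι κ ℝ} {B B' : Matrix κ ν ℝ}
    (hA : ∀ i k, 0 ≤ A i k) (hA₁ : ∀ k, ∑ i, A i k ≤ 1)
    (hB' : ∀ k j, 0 ≤ B' k j) (hB'₁ : ∀ k, ∑ j, B' k j ≤ 1) :
    ∑ i, ∑ j, |(A * B) i j - (A' * B') i j| ≤
      ∑ i, ∑ k, |A i k - A' i k| + ∑ k, ∑ j, |B k j - B' k j| := by
  have hsplit : A * B - A' * B' = (A - A') * B' + A * (B - B') := by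
    rw [Matrix.sub_mul, Matrix.mul_sub]; abel
  calc ∑ i, ∑ j, |(A * B) i j - (A' * B') i j|
      ≤ ∑ i, ∑ j, (|((A - A') * B') i j| + |(A * (B - B')) i j|) := by
        gcongr with i _ j _
        rw [← Matrix.sub_apply, hsplit, Matrix.add_apply]
        exact abs_add_le _ _
    _ ≤ ∑ i, ∑ k, |(A - A') i k| + ∑ k, ∑ j, |(B - B') k j| := by
        simp only [Finset.sum_add_distrib]
        exact add_le_add (sum_abs_mul_le_of_row_sum_le_one _ hB' hB'₁)
          (sum_abs_mul_le_of_col_sum_le_one _ hA hA₁)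
    _ = _ := by simp only [Matrix.sub_apply]

end EntrywiseL1

section Cost

variable {N nX nY nZ : ℕ} {db : (Fin N → ℝ) → (Fin N → ℝ) → ℝ} {c γ p : ℝ} {T : ℕ}

noncomputable def locCost (db : (Fin N → ℝ) → (Fin N → ℝ) → ℝ) (c p : ℝ) (T : ℕ)
    (X : Fin nX → Traj N) (Y : Fin nY → Traj N) (W : ℕ → Matrix (Fin (nX + 1)) (Fin (nY + 1)) ℝ) : ℝ :=
  ∑ k ∈ range T, ∑ i, ∑ j, dOpt db c p (tauE X i k) (tauE Y j k) ^ p * W k i j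

def switchCost (T : ℕ) (W : ℕ → Matrix (Fin (nX + 1)) (Fin (nY + 1)) ℝ) : ℝ :=
  ∑ k ∈ range (T - 1), ∑ i : Fin nX, ∑ j : Fin nY,
    |W k i.castSucc j.castSucc - W (k + 1) i.castSucc j.castSucc|

lemma lpCost_eq (X : Fin nX → Traj N) (Y : Fin nY → Traj N)
    (W : ℕ → Matrix (Fin (nX + 1)) (Fin (nY + 1)) ℝ) :
    lpCost db c γ p T X Y W = locCost db c p T X Y W + γ ^ p / 2 * switchCost T W := rfl

lemma tauE_last (X : Fin nX → Traj N) (k : ℕ) : tauE X (Fin.last nX) k = none := by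
  simp [tauE]

lemma dOpt_tauE_last_rpow (hp : p ≠ 0) (X : Fin nX → Traj N) (Y : Fin nY → Traj N) (k : ℕ) :
    dOpt db c p (tauE X (Fin.last nX) k) (tauE Y (Fin.last nY) k) ^ p = 0 := by
  simp [tauE_last, dOpt, Real.zero_rpow hp]

lemma lpCost_nonneg (hc : 0 ≤ c) (hγ : 0 ≤ γ) (hdb : ∀ x y, 0 ≤ db x y)
    (X : Fin nX → Traj N) (Y : Fin nY → Traj N)
    {W : ℕ → Matrix (Fin (nX + 1)) (Fin (nY + 1)) ℝ} (hW : ∀ k < T, memWbar (W k)) :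
    0 ≤ lpCost db c γ p T X Y W := by
  have hloc : 0 ≤ locCost db c p T X Y W :=
    Finset.sum_nonneg fun k hk => Finset.sum_nonneg fun i _ => Finset.sum_nonneg fun j _ =>
      mul_nonneg (Real.rpow_nonneg (dOpt_nonneg hc hdb _ _) p)
        ((hW k (mem_range.1 hk)).1 i j)
  have hsw : 0 ≤ switchCost T W := by unfold switchCost; positivity
  rw [lpCost_eq]
  positivity

variable {W₁ : ℕ → Matrix (Fin (nX + 1)) (Fin (nZ + 1)) ℝ}
  {W₂ : ℕ → Matrix (Fin (nZ + 1)) (Fin (nY + 1)) ℝ}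

lemma switchCost_assignComp_le (h₁ : ∀ k < T, memWbar (W₁ k))
    (h₂ : ∀ k < T, memWbar (W₂ k)) :
    switchCost T (fun k => assignComp (W₁ k) (W₂ k)) ≤ switchCost T W₁ + switchCost T W₂ := by
  rw [switchCost, switchCost, switchCost, ← Finset.sum_add_distrib]
  refine Finset.sum_le_sum fun k hk => ?_
  have hk₁ : k + 1 < T := by have := mem_range.1 hk; omega
  have h₁k := h₁ k (by omega)
  have h₂k := h₂ (k + 1) hk₁
  have := sum_abs_mul_sub_mul_le
    (A := (W₁ k).submatrix Fin.castSucc Fin.castSucc)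
    (A' := (W₁ (k + 1)).submatrix Fin.castSucc Fin.castSucc)
    (B := (W₂ k).submatrix Fin.castSucc Fin.castSucc)
    (B' := (W₂ (k + 1)).submatrix Fin.castSucc Fin.castSucc)
    (fun i z => h₁k.1 _ _) h₁k.sum_castSucc_col_le_one
    (fun z j => h₂k.1 _ _) h₂k.sum_castSucc_row_le_one
  rw [← submatrix_assignComp, ← submatrix_assignComp] at this
  exact this

variable (X : Fin nX → Traj N) (Y : Fin nY → Traj N) (Z : Fin nZ → Traj N)

lemma locCost_assignComp_le (hc : 0 ≤ c) (hp : 1 ≤ p) (hdb : ∀ x y, 0 ≤ db x y)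
    (htri : ∀ x y z, db x z ≤ db x y + db y z)
    (h₁ : ∀ k < T, memWbar (W₁ k)) (h₂ : ∀ k < T, memWbar (W₂ k)) :
    locCost db c p T X Y (fun k => assignComp (W₁ k) (W₂ k)) ≤
      ∑ k ∈ range T, ∑ i, ∑ z, ∑ j,
        (dOpt db c p (tauE X i k) (tauE Z z k) + dOpt db c p (tauE Z z k) (tauE Y j k)) ^ p *
          assignPlan (W₁ k) (W₂ k) i z j := by
  refine Finset.sum_le_sum fun k hk => ?_
  have hk := mem_range.1 hk
  rw [sum_mul_assignComp (dOpt_tauE_last_rpow (by positivity) X Y k)]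
  gcongr with i _ z _ j _
  · exact assignPlan_nonneg (h₁ k hk) (h₂ k hk) i z j
  · exact dOpt_nonneg hc hdb _ _
  · exact dOpt_triangle hc hp hdb htri _ _ _

lemma sum_assignPlan_eq_locCost_left (hp : p ≠ 0) (h₂ : ∀ k < T, memWbar (W₂ k)) :
    ∑ k ∈ range T, ∑ i, ∑ z, ∑ j,
      dOpt db c p (tauE X i k) (tauE Z z k) ^ p * assignPlan (W₁ k) (W₂ k) i z j =
      locCost db c p T X Z W₁ :=
  Finset.sum_congr rfl fun k hk =>
    sum_mul_assignPlan_left (h₂ k (mem_range.1 hk)) (dOpt_tauE_last_rpow hp X Z k)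

lemma sum_assignPlan_eq_locCost_right (hp : p ≠ 0) (h₁ : ∀ k < T, memWbar (W₁ k)) :
    ∑ k ∈ range T, ∑ i, ∑ z, ∑ j,
      dOpt db c p (tauE Z z k) (tauE Y j k) ^ p * assignPlan (W₁ k) (W₂ k) i z j =
      locCost db c p T Z Y W₂ :=
  Finset.sum_congr rfl fun k hk =>
    sum_mul_assignPlan_right (h₁ k (mem_range.1 hk)) (dOpt_tauE_last_rpow hp Z Y k)

lemma lpCost_assignComp_rpow_le (hc : 0 ≤ c) (hγ : 0 ≤ γ) (hp : 1 ≤ p)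
    (hdb : ∀ x y, 0 ≤ db x y) (htri : ∀ x y z, db x z ≤ db x y + db y z)
    (h₁ : ∀ k < T, memWbar (W₁ k)) (h₂ : ∀ k < T, memWbar (W₂ k)) :
    lpCost db c γ p T X Y (fun k => assignComp (W₁ k) (W₂ k)) ^ (1 / p) ≤
      lpCost db c γ p T X Z W₁ ^ (1 / p) + lpCost db c γ p T Z Y W₂ ^ (1 / p) := by
  have hp0 : p ≠ 0 := by positivity
  have hsw₁ : 0 ≤ γ ^ p / 2 * switchCost T W₁ := by unfold switchCost; positivity
  have hsw₂ : 0 ≤ γ ^ p / 2 * switchCost T W₂ := by unfold switchCost; positivity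
  have minkowski := Lp_add_le_of_nonneg_weighted_add (range T ×ˢ
    (univ : Finset (Fin (nX + 1) × Fin (nZ + 1) × Fin (nY + 1)))) hp
    (w := fun x => assignPlan (W₁ x.1) (W₂ x.1) x.2.1 x.2.2.1 x.2.2.2)
    (f := fun x => dOpt db c p (tauE X x.2.1 x.1) (tauE Z x.2.2.1 x.1))
    (g := fun x => dOpt db c p (tauE Z x.2.2.1 x.1) (tauE Y x.2.2.2 x.1))
    (fun x hx => assignPlan_nonneg (h₁ _ (mem_range.1 (mem_product.1 hx).1))
      (h₂ _ (mem_range.1 (mem_product.1 hx).1)) _ _ _)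
    (fun _ _ => dOpt_nonneg hc hdb _ _) (fun _ _ => dOpt_nonneg hc hdb _ _) hsw₁ hsw₂
  simp only [Finset.sum_product, Fintype.sum_prod_type, sum_assignPlan_eq_locCost_left X Z hp0 h₂,
    sum_assignPlan_eq_locCost_right Y Z hp0 h₁] at minkowski
  refine le_trans (Real.rpow_le_rpow (lpCost_nonneg hc hγ hdb X Y fun k hk =>
    memWbar_assignComp (h₁ k hk) (h₂ k hk)) ?_ (by positivity)) minkowski
  rw [lpCost_eq, ← mul_add]
  gcongr
  · exact locCost_assignComp_le X Y Z hc hp hdb htri h₁ h₂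
  · exact switchCost_assignComp_le h₁ h₂

end Cost

def lpValues {N nX nY : ℕ} (db : (Fin N → ℝ) → (Fin N → ℝ) → ℝ) (c γ p : ℝ) (T : ℕ)
    (X : Fin nX → Traj N) (Y : Fin nY → Traj N) : Set ℝ :=
  { v | ∃ W : ℕ → Matrix (Fin (nX + 1)) (Fin (nY + 1)) ℝ,
    (∀ k < T, memWbar (W k)) ∧ v = (lpCost db c γ p T X Y W) ^ (1 / p) }

lemma exists_memWbar (m n : ℕ) : ∃ W : Matrix (Fin (m + 1)) (Fin (n + 1)) ℝ, memWbar W :=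
  ⟨Matrix.of fun i j => if (i = Fin.last m) = (j = Fin.last n) then 0 else 1, by
    refine ⟨fun i j => ?_, fun j => ?_, fun i => ?_, by simp⟩
    · simp only [Matrix.of_apply]
      split_ifs <;> norm_num
    all_goals simp [Fin.castSucc_ne_last]⟩

section Values

variable {N nX nY : ℕ} {db : (Fin N → ℝ) → (Fin N → ℝ) → ℝ} {c γ p : ℝ} {T : ℕ}
  (X : Fin nX → Traj N) (Y : Fin nY → Traj N)

lemma lpValues_nonempty : (lpValues db c γ p T X Y).Nonempty :=
  let ⟨W, hW⟩ := exists_memWbar nX nY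
  ⟨_, fun _ => W, fun _ _ => hW, rfl⟩

lemma lpValues_bddBelow (hc : 0 ≤ c) (hγ : 0 ≤ γ) (hdb : ∀ x y, 0 ≤ db x y) :
    BddBelow (lpValues db c γ p T X Y) := by
  refine ⟨0, ?_⟩
  rintro _ ⟨W, hW, rfl⟩
  exact Real.rpow_nonneg (lpCost_nonneg hc hγ hdb X Y hW) _

end Values

theorem lpDist_triangle_general {N nX nY nZ : ℕ} (db : (Fin N → ℝ) → (Fin N → ℝ) → ℝ)
    (c γ p : ℝ) (hc : 0 < c) (hγ : 0 < γ) (hp : 1 ≤ p)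
    (hdb_nonneg : ∀ x y, 0 ≤ db x y)
    (hdb_tri : ∀ x y z, db x z ≤ db x y + db y z)
    (T : ℕ) (X : Fin nX → Traj N) (Y : Fin nY → Traj N) (Z : Fin nZ → Traj N) :
    lpDist db c γ p T X Y ≤ lpDist db c γ p T X Z + lpDist db c γ p T Z Y := by
  have bdd {n m : ℕ} (U : Fin n → Traj N) (V : Fin m → Traj N) :=
    lpValues_bddBelow (T := T) (p := p) U V hc.le hγ.le hdb_nonneg
  refine csInf_le_csInf_add_csInf (bdd X Y) (lpValues_nonempty X Z) (bdd X Z)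
    (lpValues_nonempty Z Y) (bdd Z Y) ?_
  rintro _ ⟨W₁, hW₁, rfl⟩ _ ⟨W₂, hW₂, rfl⟩
  exact ⟨_, ⟨fun k => assignComp (W₁ k) (W₂ k),
    fun k hk => memWbar_assignComp (hW₁ k hk) (hW₂ k hk), rfl⟩,
    lpCost_assignComp_rpow_le X Y Z hc.le hγ.le hp hdb_nonneg hdb_tri hW₁ hW₂⟩

/-- The LP relaxation distance satisfies the triangle inequality. -/
theorem lpDist_triangle {N nX nY nZ : ℕ} (db : (Fin N → ℝ) → (Fin N → ℝ) → ℝ)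
    (c γ p : ℝ) (hc : 0 < c) (hγ : 0 < γ) (hp : 1 ≤ p)
    (hdb_nonneg : ∀ x y, 0 ≤ db x y)
    (hdb_eq : ∀ x y, db x y = 0 ↔ x = y)
    (hdb_symm : ∀ x y, db x y = db y x)
    (hdb_tri : ∀ x y z, db x z ≤ db x y + db y z)
    (T : ℕ) (X : Fin nX → Traj N) (Y : Fin nY → Traj N) (Z : Fin nZ → Traj N) :
    lpDist db c γ p T X Y ≤ lpDist db c γ p T X Z + lpDist db c γ p T Z Y :=
  lpDist_triangle_general db c γ p hc hγ hp hdb_nonneg hdb_tri T X Y Z
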